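/- Let initial data ρ_{o,j} ∈ L¹(ℝ; [0,1]) for j = 1,…,M, and assume the CFL condition λ·𝒱 ≤ 1/2. Then the Godunov scheme with operator splitting preserves the total L¹-mass: for every n ≥ 0, Σ_{j=1}^M Σ_{k∈ℤ} Δx·ρ^n_{j,k} = Σ_{j=1}^M ‖ρ_{o,j}‖_{L¹(ℝ)}. -/

import Mathlib

/-!
Both half-steps keep every lane in `[0, 1]` and change the mass only by telescoping sums.
The convective step is in conservation form, so over `k ∈ ℤ` the numerical fluxes cancel after
an index shift; since `F_j(u, z) ≤ V_max u` and, by `v_j(1) = 0` and the Lipschitz bound,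
`F_j(u, z) ≤ V'_max (1 - z)`, the CFL condition keeps the update in `[0, 1]`. In the relaxation
step lane `j` gains `Δt S_{j-1}` and loses `Δt S_j`, so summing over lanes leaves
`Δt (S_0 - S_M) = 0`. The discrete convolution is a sub-probability average, hence lies in
`[0, 1]`, which gives `-V_max w (1 - u) ≤ S_j ≤ V_max u (1 - w)`; with `2 Δt V_max ≤ 1` these
bounds keep the lanes in `[0, 1]` and make the exchange terms summable. Initially the cell
averages of `ρ_{o,j}` add up to `‖ρ_{o,j}‖_{L¹} / Δx`.
-/

open scoped BigOperators ENNReal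
open MeasureTheory

noncomputable def src (M : ℕ) (v : ℕ → ℝ → ℝ) (j : ℕ) (u w U W : ℝ) : ℝ :=
  if 1 ≤ j ∧ j + 1 ≤ M then
    max (v (j + 1) W - v j U) 0 * u * (1 - w)
      - max (-(v (j + 1) W - v j U)) 0 * w * (1 - u)
  else 0

noncomputable def numFlux (v : ℕ → ℝ → ℝ) (θ : ℕ → ℝ) (j : ℕ) (u w : ℝ) : ℝ :=
  min (min u (θ j) * v j (min u (θ j))) (max w (θ j) * v j (max w (θ j)))

noncomputable def gam (dx : ℝ) (w : ℝ → ℝ) (h : ℤ) : ℝ :=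
  ∫ y in ((h : ℝ) * dx)..(((h : ℝ) + 1) * dx), w y

noncomputable def Hset (dx : ℝ) (w : ℝ → ℝ) : Finset ℤ :=
  Finset.Icc ⌊sInf (tsupport w) / dx⌋ (⌊sSup (tsupport w) / dx⌋ - 1)

noncomputable def dconv (dx : ℝ) (w : ℝ → ℝ) (r : ℤ → ℝ) (k : ℤ) : ℝ :=
  ∑ h ∈ Hset dx w, gam dx w h * r (k + h + 1)

open Set

theorem MeasureTheory.Integrable.hasSum_intervalIntegral_mul {E : Type*} [NormedAddCommGroup E]
    [NormedSpace ℝ E] {f : ℝ → E} (hf : Integrable f) {dx : ℝ} (hdx : 0 < dx) :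
    HasSum (fun k : ℤ => ∫ x in (k : ℝ) * dx..((k : ℝ) + 1) * dx, f x) (∫ x, f x) := by
  have h := (hf.comp_mul_right' hdx.ne').hasSum_intervalIntegral 0
  simp only [zero_add, intervalIntegral.integral_comp_mul_right _ hdx.ne',
    Measure.integral_comp_mul_right, abs_inv, abs_of_pos hdx] at h
  simpa [smul_smul, hdx.ne'] using h.const_smul dx

theorem cellAverage_mem_Icc {f : ℝ → ℝ} (hf : Integrable f) (hf01 : ∀ x, f x ∈ Icc (0 : ℝ) 1)
    {dx : ℝ} (hdx : 0 < dx) (k : ℤ) :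
    (∫ x in (k : ℝ) * dx..((k : ℝ) + 1) * dx, f x) / dx ∈ Icc (0 : ℝ) 1 := by
  have hcell : (k : ℝ) * dx ≤ ((k : ℝ) + 1) * dx := by nlinarith
  refine ⟨div_nonneg (intervalIntegral.integral_nonneg hcell fun x _ => (hf01 x).1) hdx.le,
    (div_le_one hdx).2 ?_⟩
  calc (∫ x in (k : ℝ) * dx..((k : ℝ) + 1) * dx, f x)
      ≤ ∫ _ in (k : ℝ) * dx..((k : ℝ) + 1) * dx, (1 : ℝ) :=
        intervalIntegral.integral_mono_on hcell hf.intervalIntegrable intervalIntegrable_const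
          fun x _ => (hf01 x).2
    _ = dx := by simp; ring

theorem gam_nonneg {dx : ℝ} (hdx : 0 < dx) {w : ℝ → ℝ} (hw0 : ∀ x, 0 ≤ w x) (h : ℤ) :
    0 ≤ gam dx w h :=
  intervalIntegral.integral_nonneg (by nlinarith) fun x _ => hw0 x

theorem sum_gam_le_one {dx : ℝ} (hdx : 0 < dx) {w : ℝ → ℝ} (hw0 : ∀ x, 0 ≤ w x)
    (hw : ∫ x, w x = 1) (s : Finset ℤ) : ∑ h ∈ s, gam dx w h ≤ 1 := by
  -- the Bochner integral of a non-integrable function is `0`, so `∫ w = 1` forces integrability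
  have hwi : Integrable w := .of_integral_ne_zero (by simp [hw])
  rw [← hw]
  exact sum_le_hasSum s (fun h _ => gam_nonneg hdx hw0 h) (hwi.hasSum_intervalIntegral_mul hdx)

theorem dconv_mem_Icc {dx : ℝ} (hdx : 0 < dx) {w : ℝ → ℝ} (hw0 : ∀ x, 0 ≤ w x)
    (hw : ∫ x, w x = 1) {r : ℤ → ℝ} (hr : ∀ k, r k ∈ Icc (0 : ℝ) 1) (k : ℤ) :
    dconv dx w r k ∈ Icc (0 : ℝ) 1 := by
  refine ⟨Finset.sum_nonneg fun h _ => mul_nonneg (gam_nonneg hdx hw0 h) (hr _).1, ?_⟩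
  calc dconv dx w r k ≤ ∑ h ∈ Hset dx w, gam dx w h :=
        Finset.sum_le_sum fun h _ => mul_le_of_le_one_right (gam_nonneg hdx hw0 h) (hr _).2
    _ ≤ 1 := sum_gam_le_one hdx hw0 hw _

theorem LipschitzOnWith.le_mul_one_sub {f : ℝ → ℝ} {K : ℝ} (hK : 0 ≤ K)
    (hf : LipschitzOnWith K.toNNReal f (Icc 0 1)) (h1 : f 1 = 0) {x : ℝ} (hx : x ∈ Icc 0 1) :
    f x ≤ K * (1 - x) := by
  have hd := hf.dist_le_mul x hx 1 ⟨zero_le_one, le_rfl⟩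
  rw [Real.dist_eq, Real.dist_eq, Real.coe_toNNReal _ hK, h1, sub_zero, abs_sub_comm,
    abs_of_nonneg (sub_nonneg.2 hx.2)] at hd
  exact (le_abs_self _).trans hd

theorem numFlux_bounds {v : ℕ → ℝ → ℝ} {θ : ℕ → ℝ} {j : ℕ} {Vmax L : ℝ}
    (hθ : θ j ∈ Icc (0 : ℝ) 1) (hv : ∀ x ∈ Icc (0 : ℝ) 1, v j x ∈ Icc 0 Vmax)
    (hvL : ∀ x ∈ Icc (0 : ℝ) 1, v j x ≤ L * (1 - x)) (hL : 0 ≤ L)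
    {u z : ℝ} (hu : u ∈ Icc (0 : ℝ) 1) (hz : z ∈ Icc (0 : ℝ) 1) :
    0 ≤ numFlux v θ j u z ∧ numFlux v θ j u z ≤ Vmax * u ∧
      numFlux v θ j u z ≤ L * (1 - z) := by
  set a := min u (θ j)
  set b := max z (θ j)
  have ha : a ∈ Icc (0 : ℝ) 1 := ⟨le_min hu.1 hθ.1, (min_le_left _ _).trans hu.2⟩
  have hb : b ∈ Icc (0 : ℝ) 1 := ⟨hθ.1.trans (le_max_right _ _), max_le hz.2 hθ.2⟩
  refine ⟨le_min (mul_nonneg ha.1 (hv a ha).1) (mul_nonneg hb.1 (hv b hb).1), ?_, ?_⟩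
  · calc numFlux v θ j u z ≤ a * v j a := min_le_left _ _
      _ ≤ u * Vmax := mul_le_mul (min_le_left _ _) (hv a ha).2 (hv a ha).1 hu.1
      _ = Vmax * u := mul_comm _ _
  · calc numFlux v θ j u z ≤ b * v j b := min_le_right _ _
      _ ≤ v j b := mul_le_of_le_one_left (hv b hb).1 hb.2
      _ ≤ L * (1 - b) := hvL b hb
      _ ≤ L * (1 - z) := mul_le_mul_of_nonneg_left (by linarith [le_max_left z (θ j)]) hL

theorem conservative_update_mem_Icc {x f g lam A B : ℝ} (hx : x ∈ Icc (0 : ℝ) 1)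
    (hf : 0 ≤ f ∧ f ≤ A * x) (hg : 0 ≤ g ∧ g ≤ B * (1 - x)) (hlam : 0 ≤ lam)
    (hA : lam * A ≤ 1 / 2) (hB : lam * B ≤ 1 / 2) : x - lam * (f - g) ∈ Icc (0 : ℝ) 1 := by
  have hf' : lam * f ≤ lam * A * x := by nlinarith
  have hg' : lam * g ≤ lam * B * (1 - x) := by nlinarith
  have hA' := mul_nonneg (sub_nonneg.2 hA) hx.1
  have hB' := mul_nonneg (sub_nonneg.2 hB) (sub_nonneg.2 hx.2)
  constructor <;> nlinarith [mul_nonneg hlam hf.1, mul_nonneg hlam hg.1]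

theorem HasSum.sub_mul_sub_shift {r G : ℤ → ℝ} {m : ℝ} (hr : HasSum r m) (hG : Summable G)
    (c : ℝ) : HasSum (fun k => r k - c * (G k - G (k - 1))) m := by
  have hshift : HasSum (fun k => G (k - 1)) (∑' k, G k) :=
    ((Equiv.subRight (1 : ℤ)).hasSum_iff.2 hG.hasSum)
  simpa using hr.sub ((hG.hasSum.sub hshift).mul_left c)

def AdmissibleLanes (M : ℕ) (r : ℕ → ℤ → ℝ) : Prop :=
  ∀ j ∈ Finset.Icc 1 M, (∀ k, r j k ∈ Icc (0 : ℝ) 1) ∧ Summable (r j)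

noncomputable def totalMass (M : ℕ) (r : ℕ → ℤ → ℝ) : ℝ :=
  ∑ j ∈ Finset.Icc 1 M, ∑' k, r j k

theorem convective_step {M : ℕ} {r r' : ℕ → ℤ → ℝ} {F : ℕ → ℝ → ℝ → ℝ} {lam A B : ℝ}
    (hr : AdmissibleLanes M r)
    (hF : ∀ j ∈ Finset.Icc 1 M, ∀ u ∈ Icc (0 : ℝ) 1, ∀ z ∈ Icc (0 : ℝ) 1,
      0 ≤ F j u z ∧ F j u z ≤ A * u ∧ F j u z ≤ B * (1 - z))
    (hlam : 0 ≤ lam) (hA : lam * A ≤ 1 / 2) (hB : lam * B ≤ 1 / 2)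
    (hr' : ∀ j ∈ Finset.Icc 1 M, ∀ k, r' j k =
      r j k - lam * (F j (r j k) (r j (k + 1)) - F j (r j (k - 1)) (r j k))) :
    AdmissibleLanes M r' ∧ totalMass M r' = totalMass M r := by
  have hlane : ∀ j ∈ Finset.Icc 1 M,
      (∀ k, r' j k ∈ Icc (0 : ℝ) 1) ∧ HasSum (r' j) (∑' k, r j k) := by
    intro j hj
    obtain ⟨h01, hsum⟩ := hr j hj
    have hFk := fun k => hF j hj _ (h01 k) _ (h01 (k + 1))
    have hG : Summable fun k => F j (r j k) (r j (k + 1)) :=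
      .of_nonneg_of_le (fun k => (hFk k).1) (fun k => (hFk k).2.1) (hsum.mul_left A)
    refine ⟨fun k => ?_, ?_⟩
    · have hg := hFk (k - 1)
      rw [sub_add_cancel] at hg
      rw [hr' j hj k]
      exact conservative_update_mem_Icc (h01 k) ⟨(hFk k).1, (hFk k).2.1⟩ ⟨hg.1, hg.2.2⟩
        hlam hA hB
    · convert hsum.hasSum.sub_mul_sub_shift hG lam using 1
      funext k
      rw [hr' j hj k, sub_add_cancel]
  exact ⟨fun j hj => ⟨(hlane j hj).1, (hlane j hj).2.summable⟩,
    Finset.sum_congr rfl fun j hj => (hlane j hj).2.tsum_eq⟩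

theorem Finset.sum_Icc_one_pred_sub {G : Type*} [AddCommGroup G] (f : ℕ → G) (M : ℕ) :
    ∑ j ∈ Finset.Icc 1 M, (f (j - 1) - f j) = f 0 - f M := by
  rw [← Finset.Ico_add_one_right_eq_Icc, Finset.sum_Ico_eq_sum_range]
  simpa [add_comm 1] using Finset.sum_range_sub' f M

theorem exchange_update_mem_Icc {x a b L dt : ℝ} (hx : x ∈ Icc (0 : ℝ) 1)
    (ha : -(L * x) ≤ a ∧ a ≤ L * (1 - x)) (hb : -(L * (1 - x)) ≤ b ∧ b ≤ L * x)
    (hdt : 0 ≤ dt) (hdtL : 2 * (dt * L) ≤ 1) : x + dt * a - dt * b ∈ Icc (0 : ℝ) 1 := by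
  have h1 := mul_nonneg (sub_nonneg.2 hdtL) hx.1
  have h2 := mul_nonneg (sub_nonneg.2 hdtL) (sub_nonneg.2 hx.2)
  constructor <;> nlinarith [mul_le_mul_of_nonneg_left ha.1 hdt, mul_le_mul_of_nonneg_left ha.2 hdt,
    mul_le_mul_of_nonneg_left hb.1 hdt, mul_le_mul_of_nonneg_left hb.2 hdt]

/-- `S i k` is the flow from lane `i` into lane `i + 1`; these are the bounds that the
lane-changing term `S_i(u, w, ·, ·)` satisfies at `u = r i k`, `w = r (i + 1) k`. -/
def ExchangeBounded (M : ℕ) (L : ℝ) (r S : ℕ → ℤ → ℝ) : Prop :=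
  ∀ i, 1 ≤ i → i + 1 ≤ M → ∀ k,
    -(L * (r (i + 1) k * (1 - r i k))) ≤ S i k ∧ S i k ≤ L * (r i k * (1 - r (i + 1) k))

section Relaxation

variable {M : ℕ} {r S : ℕ → ℤ → ℝ} {L : ℝ}

theorem inflow_bounds (hS0 : ∀ k, S 0 k = 0)
    (hS : ExchangeBounded M L r S)
    (hr : AdmissibleLanes M r) (hL : 0 ≤ L) {j : ℕ} (hj : j ∈ Finset.Icc 1 M) (k : ℤ) :
    -(L * r j k) ≤ S (j - 1) k ∧ S (j - 1) k ≤ L * (1 - r j k) := by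
  obtain ⟨hj1, hjM⟩ := Finset.mem_Icc.mp hj
  have hx := (hr j hj).1 k
  rcases hj1.eq_or_lt with rfl | hj1
  · rw [Nat.sub_self, hS0]
    exact ⟨by nlinarith [hx.1], by nlinarith [hx.2]⟩
  · have hy := (hr (j - 1) (Finset.mem_Icc.2 ⟨by omega, by omega⟩)).1 k
    have h := hS (j - 1) (by omega) (by omega) k
    rw [Nat.sub_add_cancel hj1.le] at h
    exact ⟨by nlinarith [mul_nonneg (mul_nonneg hL hx.1) hy.1],
      by nlinarith [mul_nonneg (mul_nonneg hL (sub_nonneg.2 hx.2)) (sub_nonneg.2 hy.2)]⟩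

theorem outflow_bounds (hSM : ∀ k, S M k = 0)
    (hS : ExchangeBounded M L r S)
    (hr : AdmissibleLanes M r) (hL : 0 ≤ L) {j : ℕ} (hj : j ∈ Finset.Icc 1 M) (k : ℤ) :
    -(L * (1 - r j k)) ≤ S j k ∧ S j k ≤ L * r j k := by
  obtain ⟨hj1, hjM⟩ := Finset.mem_Icc.mp hj
  have hx := (hr j hj).1 k
  rcases hjM.eq_or_lt with rfl | hjM
  · rw [hSM]
    exact ⟨by nlinarith [hx.2], by nlinarith [hx.1]⟩
  · have hy := (hr (j + 1) (Finset.mem_Icc.2 ⟨by omega, by omega⟩)).1 k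
    have h := hS j hj1 hjM k
    exact ⟨by nlinarith [mul_nonneg (mul_nonneg hL (sub_nonneg.2 hx.2)) (sub_nonneg.2 hy.2)],
      by nlinarith [mul_nonneg (mul_nonneg hL hx.1) hy.1]⟩

theorem summable_exchange (hS0 : ∀ k, S 0 k = 0) (hSM : ∀ k, S M k = 0)
    (hS : ExchangeBounded M L r S)
    (hr : AdmissibleLanes M r) (hL : 0 ≤ L) {i : ℕ} (hi : i ≤ M) : Summable (S i) := by
  rcases Nat.eq_zero_or_pos i with rfl | hi0
  · rw [show S 0 = 0 from funext hS0]; exact summable_zero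
  rcases hi.eq_or_lt with rfl | hiM
  · rw [show S i = 0 from funext hSM]; exact summable_zero
  obtain ⟨hx, hxs⟩ := hr i (Finset.mem_Icc.2 ⟨hi0, hi⟩)
  obtain ⟨hy, hys⟩ := hr (i + 1) (Finset.mem_Icc.2 ⟨by omega, hiM⟩)
  refine .of_norm_bounded ((hxs.add hys).mul_left L) fun k => ?_
  have h := hS i hi0 hiM k
  rw [Real.norm_eq_abs, abs_le]
  exact ⟨by nlinarith [mul_nonneg (mul_nonneg hL (hx k).1) (hy k).1, (hx k).2],
    by nlinarith [mul_nonneg (mul_nonneg hL (hx k).1) (hy k).1, (hy k).2]⟩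

theorem relaxation_step {r' : ℕ → ℤ → ℝ} {dt : ℝ} (hS0 : ∀ k, S 0 k = 0)
    (hSM : ∀ k, S M k = 0)
    (hS : ExchangeBounded M L r S)
    (hr : AdmissibleLanes M r) (hL : 0 ≤ L) (hdt : 0 ≤ dt) (hdtL : 2 * (dt * L) ≤ 1)
    (hr' : ∀ j ∈ Finset.Icc 1 M, ∀ k, r' j k = r j k + dt * S (j - 1) k - dt * S j k) :
    AdmissibleLanes M r' ∧ totalMass M r' = totalMass M r := by
  have hSsum : ∀ i ≤ M, Summable (S i) := fun i hi => summable_exchange hS0 hSM hS hr hL hi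
  have hlane : ∀ j ∈ Finset.Icc 1 M, HasSum (r' j)
      (∑' k, r j k + dt * ∑' k, S (j - 1) k - dt * ∑' k, S j k) := by
    intro j hj
    have hjM := (Finset.mem_Icc.mp hj).2
    rw [funext (hr' j hj)]
    exact ((hr j hj).2.hasSum.add ((hSsum (j - 1) (by omega)).hasSum.mul_left dt)).sub
      ((hSsum j hjM).hasSum.mul_left dt)
  refine ⟨fun j hj => ⟨fun k => ?_, (hlane j hj).summable⟩, ?_⟩
  · rw [hr' j hj k]
    exact exchange_update_mem_Icc ((hr j hj).1 k) (inflow_bounds hS0 hS hr hL hj k)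
      (outflow_bounds hSM hS hr hL hj k) hdt hdtL
  · rw [totalMass, Finset.sum_congr rfl fun j hj => (hlane j hj).tsum_eq.trans (add_sub_assoc ..),
      Finset.sum_add_distrib,
      Finset.sum_Icc_one_pred_sub (fun i => dt * ∑' k, S i k), funext hS0, funext hSM]
    simp [totalMass]

end Relaxation

theorem src_bounds {M : ℕ} {v : ℕ → ℝ → ℝ} {Vmax : ℝ} {j : ℕ} {u w U W : ℝ}
    (hvU : v j U ∈ Icc 0 Vmax) (hvW : v (j + 1) W ∈ Icc 0 Vmax)
    (hu : u ∈ Icc (0 : ℝ) 1) (hw : w ∈ Icc (0 : ℝ) 1) :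
    -(Vmax * (w * (1 - u))) ≤ src M v j u w U W ∧ src M v j u w U W ≤ Vmax * (u * (1 - w)) := by
  have hV : 0 ≤ Vmax := hvU.1.trans hvU.2
  have hp : 0 ≤ u * (1 - w) := mul_nonneg hu.1 (sub_nonneg.2 hw.2)
  have hq : 0 ≤ w * (1 - u) := mul_nonneg hw.1 (sub_nonneg.2 hu.2)
  unfold src
  split_ifs
  · set d := v (j + 1) W - v j U
    have ha : max d 0 ∈ Icc 0 Vmax := ⟨le_max_right _ _, max_le (by linarith [hvW.2, hvU.1]) hV⟩
    have hb : max (-d) 0 ∈ Icc 0 Vmax :=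
      ⟨le_max_right _ _, max_le (by linarith [hvW.1, hvU.2]) hV⟩
    constructor <;> nlinarith [mul_nonneg ha.1 hp, mul_nonneg hb.1 hq,
      mul_le_mul_of_nonneg_right ha.2 hp, mul_le_mul_of_nonneg_right hb.2 hq]
  · exact ⟨by nlinarith, by nlinarith⟩

/-- `S_i(ρ_{i,k}, ρ_{i+1,k}, R_{i,k}, R_{i+1,k})` in the notation of the scheme. -/
noncomputable def laneExchange (M : ℕ) (v : ℕ → ℝ → ℝ) (dx : ℝ) (w : ℝ → ℝ)
    (r : ℕ → ℤ → ℝ) (i : ℕ) (k : ℤ) : ℝ :=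
  src M v i (r i k) (r (i + 1) k) (dconv dx w (r i) k) (dconv dx w (r (i + 1)) k)

section LaneExchange

variable {M : ℕ} {v : ℕ → ℝ → ℝ} {dx : ℝ} {w : ℝ → ℝ} {r : ℕ → ℤ → ℝ}

theorem laneExchange_zero (k : ℤ) : laneExchange M v dx w r 0 k = 0 := by
  simp [laneExchange, src]

theorem laneExchange_top (k : ℤ) : laneExchange M v dx w r M k = 0 := by
  simp [laneExchange, src]

theorem laneExchange_pred {j : ℕ} (hj : 1 ≤ j) (k : ℤ) :
    laneExchange M v dx w r (j - 1) k =
      src M v (j - 1) (r (j - 1) k) (r j k) (dconv dx w (r (j - 1)) k) (dconv dx w (r j) k) := by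
  rw [laneExchange, Nat.sub_add_cancel hj]

theorem laneExchange_bounds {Vmax : ℝ}
    (hv : ∀ j ∈ Finset.Icc 1 M, ∀ x ∈ Icc (0 : ℝ) 1, v j x ∈ Icc 0 Vmax) (hdx : 0 < dx)
    (hw0 : ∀ x, 0 ≤ w x) (hw : ∫ x, w x = 1) (hr : AdmissibleLanes M r) :
    ExchangeBounded M Vmax r (laneExchange M v dx w r) := by
  intro i hi hiM k
  have hi' : i ∈ Finset.Icc 1 M := Finset.mem_Icc.2 ⟨hi, by omega⟩
  have hi1 : i + 1 ∈ Finset.Icc 1 M := Finset.mem_Icc.2 ⟨by omega, hiM⟩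
  exact src_bounds (hv i hi' _ (dconv_mem_Icc hdx hw0 hw (hr i hi').1 k))
    (hv (i + 1) hi1 _ (dconv_mem_Icc hdx hw0 hw (hr (i + 1) hi1).1 k))
    ((hr i hi').1 k) ((hr (i + 1) hi1).1 k)

end LaneExchange

theorem initial_step {M : ℕ} {dx : ℝ} (hdx : 0 < dx) {f : ℕ → ℝ → ℝ} {r : ℕ → ℤ → ℝ}
    (hf01 : ∀ j ∈ Finset.Icc 1 M, ∀ x, f j x ∈ Icc (0 : ℝ) 1)
    (hf : ∀ j ∈ Finset.Icc 1 M, Integrable (f j))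
    (hr : ∀ j ∈ Finset.Icc 1 M, ∀ k : ℤ,
      r j k = (∫ x in (k : ℝ) * dx..((k : ℝ) + 1) * dx, f j x) / dx) :
    AdmissibleLanes M r ∧ totalMass M r = ∑ j ∈ Finset.Icc 1 M, (∫ x, f j x) / dx := by
  have hlane : ∀ j ∈ Finset.Icc 1 M, HasSum (r j) ((∫ x, f j x) / dx) := fun j hj => by
    rw [funext (hr j hj)]
    exact ((hf j hj).hasSum_intervalIntegral_mul hdx).div_const dx
  refine ⟨fun j hj => ⟨fun k => ?_, (hlane j hj).summable⟩,
    Finset.sum_congr rfl fun j hj => (hlane j hj).tsum_eq⟩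
  rw [hr j hj k]
  exact cellAverage_mem_Icc (hf j hj) (hf01 j hj) hdx k

theorem sum_tsum_ofReal_eq_sum_lintegral {M : ℕ} {dx : ℝ} (hdx : 0 < dx) {f : ℕ → ℝ → ℝ}
    {r : ℕ → ℤ → ℝ} (hf0 : ∀ j ∈ Finset.Icc 1 M, ∀ x, 0 ≤ f j x)
    (hf : ∀ j ∈ Finset.Icc 1 M, Integrable (f j)) (hr : AdmissibleLanes M r)
    (hmass : totalMass M r = ∑ j ∈ Finset.Icc 1 M, (∫ x, f j x) / dx) :
    ∑ j ∈ Finset.Icc 1 M, ∑' k, ENNReal.ofReal (dx * r j k) =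
      ∑ j ∈ Finset.Icc 1 M, ∫⁻ x, ENNReal.ofReal (f j x) := by
  have hr0 : ∀ j ∈ Finset.Icc 1 M, ∀ k, 0 ≤ r j k := fun j hj k => ((hr j hj).1 k).1
  have hlane : ∀ j ∈ Finset.Icc 1 M,
      ∑' k, ENNReal.ofReal (dx * r j k) = ENNReal.ofReal (dx * ∑' k, r j k) := fun j hj => by
    rw [← ENNReal.ofReal_tsum_of_nonneg (fun k => mul_nonneg hdx.le (hr0 j hj k))
      ((hr j hj).2.mul_left dx), tsum_mul_left]
  have hint : ∀ j ∈ Finset.Icc 1 M,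
      ∫⁻ x, ENNReal.ofReal (f j x) = ENNReal.ofReal (∫ x, f j x) := fun j hj =>
    (ofReal_integral_eq_lintegral_ofReal (hf j hj) (.of_forall (hf0 j hj))).symm
  rw [Finset.sum_congr rfl hlane, Finset.sum_congr rfl hint,
    ← ENNReal.ofReal_sum_of_nonneg fun j hj => mul_nonneg hdx.le (tsum_nonneg (hr0 j hj)),
    ← ENNReal.ofReal_sum_of_nonneg fun j hj => integral_nonneg (hf0 j hj),
    ← Finset.mul_sum, ← totalMass, hmass, ← Finset.sum_div, mul_div_cancel₀ _ hdx.ne']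

theorem scheme_mass_conservation_general
    (M : ℕ) (hM : 2 ≤ M)
    (v : ℕ → ℝ → ℝ) (θ : ℕ → ℝ)
    (dx dt Vmax V'max : ℝ)
    (w : ℝ → ℝ)
    (ρ₀ : ℕ → ℝ → ℝ) (ρ ρh : ℕ → ℕ → ℤ → ℝ)
    (hdx : dx ∈ Set.Ioo (0 : ℝ) 1) (hdt : 0 < dt)
    (hw_nonneg : ∀ x, 0 ≤ w x)
    (hw_int : ∫ x, w x = 1)
    (hv_nonneg : ∀ j ∈ Finset.Icc 1 M, ∀ x ∈ Set.Icc (0 : ℝ) 1, 0 ≤ v j x)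
    (hv_one : ∀ j ∈ Finset.Icc 1 M, v j 1 = 0)
    (hVmax : ∀ j ∈ Finset.Icc 1 M, ∀ x ∈ Set.Icc (0 : ℝ) 1, |v j x| ≤ Vmax)
    (hV'nonneg : 0 ≤ V'max)
    (hLip : ∀ j ∈ Finset.Icc 1 M,
      LipschitzOnWith (Real.toNNReal V'max) (v j) (Set.Icc (0 : ℝ) 1))
    (hθmem : ∀ j ∈ Finset.Icc 1 M, θ j ∈ Set.Icc (0 : ℝ) 1)
    (hCFL : dt / dx * (Vmax + V'max) ≤ 1 / 2)
    (hρ₀mem : ∀ j ∈ Finset.Icc 1 M, ∀ x, ρ₀ j x ∈ Set.Icc (0 : ℝ) 1)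
    (hInt : ∀ j ∈ Finset.Icc 1 M, Integrable (ρ₀ j))
    (hinit : ∀ j ∈ Finset.Icc 1 M, ∀ k : ℤ,
      ρ 0 j k = (∫ x in ((k : ℝ) * dx)..(((k : ℝ) + 1) * dx), ρ₀ j x) / dx)
    (hconv : ∀ n : ℕ, ∀ j ∈ Finset.Icc 1 M, ∀ k : ℤ,
      ρh n j k = ρ n j k - dt / dx *
        (numFlux v θ j (ρ n j k) (ρ n j (k + 1))
          - numFlux v θ j (ρ n j (k - 1)) (ρ n j k)))
    (hrelax : ∀ n : ℕ, ∀ j ∈ Finset.Icc 1 M, ∀ k : ℤ,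
      ρ (n + 1) j k = ρh n j k
        + dt * src M v (j - 1) (ρh n (j - 1) k) (ρh n j k)
            (dconv dx w (ρh n (j - 1)) k) (dconv dx w (ρh n j) k)
        - dt * src M v j (ρh n j k) (ρh n (j + 1) k)
            (dconv dx w (ρh n j) k) (dconv dx w (ρh n (j + 1)) k))
    :
    ∀ n : ℕ,
      (∑ j ∈ Finset.Icc 1 M, ∑' k : ℤ, ENNReal.ofReal (dx * ρ n j k))
        = ∑ j ∈ Finset.Icc 1 M, ∫⁻ x : ℝ, ENNReal.ofReal (ρ₀ j x) := by
  obtain ⟨hdx0, hdx1⟩ := hdx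
  have hv : ∀ j ∈ Finset.Icc 1 M, ∀ x ∈ Icc (0 : ℝ) 1, v j x ∈ Icc 0 Vmax := fun j hj x hx =>
    ⟨hv_nonneg j hj x hx, (abs_le.mp (hVmax j hj x hx)).2⟩
  have hVmax0 : 0 ≤ Vmax := (abs_nonneg _).trans
    (hVmax 1 (Finset.mem_Icc.2 ⟨le_rfl, by omega⟩) 1 (right_mem_Icc.2 zero_le_one))
  have hlam : 0 ≤ dt / dx := (div_pos hdt hdx0).le
  have hlamV : dt / dx * Vmax ≤ 1 / 2 := by nlinarith
  have hlamV' : dt / dx * V'max ≤ 1 / 2 := by nlinarith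
  have hdtV : 2 * (dt * Vmax) ≤ 1 := by
    have : dt * Vmax = dt / dx * Vmax * dx := by field_simp
    nlinarith [mul_le_mul_of_nonneg_right hlamV hdx0.le]
  have key : ∀ n, AdmissibleLanes M (ρ n) ∧
      totalMass M (ρ n) = ∑ j ∈ Finset.Icc 1 M, (∫ x, ρ₀ j x) / dx := by
    intro n
    induction n with
    | zero => exact initial_step hdx0 hρ₀mem hInt hinit
    | succ n ih =>
      obtain ⟨hρh, hconvMass⟩ := convective_step ih.1
        (fun j hj u hu z hz => numFlux_bounds (hθmem j hj) (hv j hj)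
          (fun x hx => (hLip j hj).le_mul_one_sub hV'nonneg (hv_one j hj) hx) hV'nonneg hu hz)
        hlam hlamV hlamV' (hconv n)
      obtain ⟨hρ, hrelaxMass⟩ := relaxation_step (r' := ρ (n + 1))
        laneExchange_zero laneExchange_top
        (laneExchange_bounds hv hdx0 hw_nonneg hw_int hρh) hρh hVmax0 hdt.le hdtV
        fun j hj k => by rw [hrelax n j hj k, laneExchange_pred (Finset.mem_Icc.mp hj).1]; rfl
      exact ⟨hρ, by rw [hrelaxMass, hconvMass, ih.2]⟩
  exact fun n => sum_tsum_ofReal_eq_sum_lintegral hdx0 (fun j hj x => (hρ₀mem j hj x).1) hInt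
    (key n).1 (key n).2

theorem scheme_mass_conservation
    (M : ℕ) (hM : 2 ≤ M)
    (v : ℕ → ℝ → ℝ) (θ : ℕ → ℝ)
    (dx dt ν Vmax V'max : ℝ)
    (w : ℝ → ℝ)
    (ρ₀ : ℕ → ℝ → ℝ) (ρ ρh : ℕ → ℕ → ℤ → ℝ)
    (hdx : dx ∈ Set.Ioo (0 : ℝ) 1) (hdt : 0 < dt) (hν : 0 < ν)
    (hw_cont : ContinuousOn w (Set.Icc (-ν) ν))
    (hw_nonneg : ∀ x, 0 ≤ w x)
    (hw_supp : Function.support w ⊆ Set.Icc (-ν) ν)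
    (hw_int : ∫ x, w x = 1)
    (hv_anti : ∀ j ∈ Finset.Icc 1 M, StrictAntiOn (v j) (Set.Icc (0 : ℝ) 1))
    (hv_nonneg : ∀ j ∈ Finset.Icc 1 M, ∀ x ∈ Set.Icc (0 : ℝ) 1, 0 ≤ v j x)
    (hv_one : ∀ j ∈ Finset.Icc 1 M, v j 1 = 0)
    (hVmax : ∀ j ∈ Finset.Icc 1 M, ∀ x ∈ Set.Icc (0 : ℝ) 1, |v j x| ≤ Vmax)
    (hV'nonneg : 0 ≤ V'max)
    (hLip : ∀ j ∈ Finset.Icc 1 M,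
      LipschitzOnWith (Real.toNNReal V'max) (v j) (Set.Icc (0 : ℝ) 1))
    (hθmem : ∀ j ∈ Finset.Icc 1 M, θ j ∈ Set.Icc (0 : ℝ) 1)
    (hθmax : ∀ j ∈ Finset.Icc 1 M, ∀ u ∈ Set.Icc (0 : ℝ) 1,
      u * v j u ≤ θ j * v j (θ j))
    (hθuniq : ∀ j ∈ Finset.Icc 1 M, ∀ u ∈ Set.Icc (0 : ℝ) 1,
      u * v j u = θ j * v j (θ j) → u = θ j)
    (hCFL : dt / dx * (Vmax + V'max) ≤ 1 / 2)
    (hρ₀mem : ∀ j ∈ Finset.Icc 1 M, ∀ x, ρ₀ j x ∈ Set.Icc (0 : ℝ) 1)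
    (hInt : ∀ j ∈ Finset.Icc 1 M, Integrable (ρ₀ j))
    (hinit : ∀ j ∈ Finset.Icc 1 M, ∀ k : ℤ,
      ρ 0 j k = (∫ x in ((k : ℝ) * dx)..(((k : ℝ) + 1) * dx), ρ₀ j x) / dx)
    (hconv : ∀ n : ℕ, ∀ j ∈ Finset.Icc 1 M, ∀ k : ℤ,
      ρh n j k = ρ n j k - dt / dx *
        (numFlux v θ j (ρ n j k) (ρ n j (k + 1))
          - numFlux v θ j (ρ n j (k - 1)) (ρ n j k)))
    (hrelax : ∀ n : ℕ, ∀ j ∈ Finset.Icc 1 M, ∀ k : ℤ,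
      ρ (n + 1) j k = ρh n j k
        + dt * src M v (j - 1) (ρh n (j - 1) k) (ρh n j k)
            (dconv dx w (ρh n (j - 1)) k) (dconv dx w (ρh n j) k)
        - dt * src M v j (ρh n j k) (ρh n (j + 1) k)
            (dconv dx w (ρh n j) k) (dconv dx w (ρh n (j + 1)) k))
    :
    ∀ n : ℕ,
      (∑ j ∈ Finset.Icc 1 M, ∑' k : ℤ, ENNReal.ofReal (dx * ρ n j k))
        = ∑ j ∈ Finset.Icc 1 M, ∫⁻ x : ℝ, ENNReal.ofReal (ρ₀ j x) :=
  scheme_mass_conservation_general M hM v θ dx dt Vmax V'max w ρ₀ ρ ρh hdx hdt hw_nonneg hw_int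
    hv_nonneg hv_one hVmax hV'nonneg hLip hθmem hCFL hρ₀mem hInt hinit hconv hrelax
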